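/- arXiv:cs/0510018 — 3 statements merged into one kernel-verified Lean document; each statement's English description precedes it below -/
import Mathlib

section
/- Let (Q,*) be a quasigroup and N, K natural numbers. Let L = (l_0, …, l_{K-1}), L' = (l'_0, …, l'_{K-1}) ∈ Q^K be two (possibly different) leader strings and A, A' ∈ Q^N two inputs, with intermediate strings D^(m) = (e_{l_{m-1}} ∘ ⋯ ∘ e_{l_0})(A) and D'^(m) = (e_{l'_{m-1}} ∘ ⋯ ∘ e_{l'_0})(A') for 0 ≤ m ≤ K (so D^(0) = A and D^(K) = E_{L,K}(A)). If D^(K) = D'^(K), then for every j with 0 ≤ j ≤ K and every index i with j ≤ i ≤ N-1, the i-th coordinate of D^(K-j) equals the i-th coordinate of D'^(K-j); that is, the final output alone determines, for each intermediate row counted j steps from the bottom, all of its coordinates with index at least j, independently of the leaders. -/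
/-- The quasigroup `e`-transformation of a string `A ∈ Q^N` with leader `l`:
`b 0 = l * a 0` and `b i = b (i-1) * a i`, i.e. `b i` is the left fold of
`mul` over `a 0, …, a i` starting from `l`. -/
def eTr {Q : Type*} (mul : Q → Q → Q) (l : Q) {N : ℕ} (A : Fin N → Q)
    (i : Fin N) : Q :=
  ((List.ofFn A).take ((i : ℕ) + 1)).foldl mul l

/-- The `E`-transformation determined by a list of leaders: apply the
`e`-transformations with the successive leaders, first leader first. -/
def eTrL {Q : Type*} (mul : Q → Q → Q) {N : ℕ} (L : List Q)
    (A : Fin N → Q) : Fin N → Q :=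
  L.foldl (fun B l => eTr mul l B) A

/-!
Each row of the `e`-transformation satisfies `b (i+1) = b i * a (i+1)`, so by left cancellation
`a (i+1)` is determined by the two consecutive outputs `b i`, `b (i+1)`, whatever the leader.
Hence if two output rows agree from index `j` on, their input rows agree from index `j + 1` on;
going up `j` rows from the common final output loses one coordinate per row.
-/

section

variable {Q : Type*} (mul : Q → Q → Q) {N : ℕ}

theorem eTr_succ (l : Q) (B : Fin N → Q) (i : ℕ) (hi : i + 1 < N) :
    eTr mul l B ⟨i + 1, hi⟩ = mul (eTr mul l B ⟨i, by omega⟩) (B ⟨i + 1, hi⟩) := by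
  have hlen : i + 1 < (List.ofFn B).length := by simpa using hi
  rw [eTr, eTr, List.take_add_one (i := i + 1), List.getElem?_eq_getElem hlen,
    Option.toList_some, List.foldl_append, List.foldl_cons, List.foldl_nil, List.getElem_ofFn]

theorem eTrL_take_succ (L : List Q) (A : Fin N → Q) (m : ℕ) (hm : m < L.length) :
    eTrL mul (L.take (m + 1)) A = eTr mul L[m] (eTrL mul (L.take m) A) := by
  rw [eTrL, List.take_add_one, List.getElem?_eq_getElem hm, Option.toList_some, List.foldl_append]
  rfl

variable {mul}

theorem eq_of_eTr_eq_of_le (hcancel : ∀ u, Function.Injective (mul u)) {l l' : Q}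
    {B B' : Fin N → Q} {j : ℕ} (h : ∀ i : Fin N, j ≤ i → eTr mul l B i = eTr mul l' B' i)
    (i : Fin N) (hi : j < i) : B i = B' i := by
  obtain ⟨k, hk⟩ : ∃ k, (i : ℕ) = k + 1 := ⟨i - 1, by omega⟩
  have hkN : k + 1 < N := hk ▸ i.2
  obtain rfl : i = ⟨k + 1, hkN⟩ := Fin.ext hk
  have hprev := h ⟨k, by omega⟩ (by simp only; omega)
  have hcur := h ⟨k + 1, hkN⟩ hi.le
  rw [eTr_succ, eTr_succ, hprev] at hcur
  exact hcancel _ hcur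

end

theorem ETr_determines_triangle_general {Q : Type*} (mul : Q → Q → Q)
    (hleft : ∀ u v : Q, ∃! x, mul u x = v)
    (N K : ℕ) (L L' : Fin K → Q) (A A' : Fin N → Q)
    (D : ℕ → Fin N → Q) (D' : ℕ → Fin N → Q)
    (hD : ∀ m, D m = eTrL mul ((List.ofFn L).take m) A)
    (hD' : ∀ m, D' m = eTrL mul ((List.ofFn L').take m) A')
    (h : D K = D' K) :
    ∀ j ≤ K, ∀ i : Fin N, j ≤ (i : ℕ) → D (K - j) i = D' (K - j) i := by
  have hcancel : ∀ u, Function.Injective (mul u) := fun u x y hxy =>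
    (hleft u (mul u x)).unique rfl hxy.symm
  have hstep : ∀ m (hm : m < K), D (m + 1) = eTr mul (L ⟨m, hm⟩) (D m) := fun m hm => by
    rw [hD, hD, eTrL_take_succ mul _ _ _ (by simpa using hm), List.getElem_ofFn]
  have hstep' : ∀ m (hm : m < K), D' (m + 1) = eTr mul (L' ⟨m, hm⟩) (D' m) := fun m hm => by
    rw [hD', hD', eTrL_take_succ mul _ _ _ (by simpa using hm), List.getElem_ofFn]
  intro j
  induction j with
  | zero => intro _ i _; simpa using congrFun h i
  | succ j ih =>
    intro hj i hi
    have hrow := ih (by omega)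
    rw [show K - j = K - (j + 1) + 1 by omega, hstep _ (by omega), hstep' _ (by omega)] at hrow
    exact eq_of_eTr_eq_of_le hcancel hrow i (by omega)

/-- For a quasigroup `(Q, *)`, leader strings `L, L' ∈ Q^K` and
inputs `A, A' ∈ Q^N`, with intermediate strings
`D^(m) = (e_{l_{m-1}} ∘ ⋯ ∘ e_{l_0}) A` (so `D^(0) = A`, `D^(K) = E_{L,K} A`),
if `D^(K) = D'^(K)` then for every `0 ≤ j ≤ K` and every index `j ≤ i ≤ N - 1`,
the `i`-th coordinate of `D^(K-j)` equals the `i`-th coordinate of `D'^(K-j)`: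
the final output alone determines, for each intermediate row counted `j` steps
from the bottom, all of its coordinates with index at least `j`,
independently of the leaders. -/
theorem ETr_determines_triangle {Q : Type*} (mul : Q → Q → Q)
    (hleft : ∀ u v : Q, ∃! x, mul u x = v)
    (hright : ∀ u v : Q, ∃! y, mul y u = v)
    (N K : ℕ) (L L' : Fin K → Q) (A A' : Fin N → Q)
    (D : ℕ → Fin N → Q) (D' : ℕ → Fin N → Q)
    (hD : ∀ m, D m = eTrL mul ((List.ofFn L).take m) A)
    (hD' : ∀ m, D' m = eTrL mul ((List.ofFn L').take m) A')
    (h : D K = D' K) :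
    ∀ j ≤ K, ∀ i : Fin N, j ≤ (i : ℕ) → D (K - j) i = D' (K - j) i :=
  ETr_determines_triangle_general mul hleft N K L L' A A' D D' hD hD' h
end

section
/- Let (Q,*) be the quasigroup on Q = {0,1,2,3} with multiplication table rows (indexed by the left argument) 0*(0,1,2,3) = (2,1,0,3), 1*(0,1,2,3) = (3,0,1,2), 2*(0,1,2,3) = (1,2,3,0), 3*(0,1,2,3) = (0,3,2,1). Define F : Q^2 → Q^2 by applying to the pair (a_0, a_1) the eight successive e-transformations with leaders 3, 3, a_1, a_0, a_1, a_0, a_1, a_0 (in this order), i.e., F(a_0, a_1) = (e_{a_0} ∘ e_{a_1} ∘ e_{a_0} ∘ e_{a_1} ∘ e_{a_0} ∘ e_{a_1} ∘ e_3 ∘ e_3)(a_0, a_1). Then F is a bijection of Q^2 (a permutation of the 16 pairs). -/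
/-- The quasigroup operation on `Q = {0,1,2,3}` given by the multiplication
table with rows (indexed by the left argument)
`0*(0,1,2,3) = (2,1,0,3)`, `1*(0,1,2,3) = (3,0,1,2)`,
`2*(0,1,2,3) = (1,2,3,0)`, `3*(0,1,2,3) = (0,3,2,1)`. -/
def qmul : Fin 4 → Fin 4 → Fin 4 :=
  ![![2, 1, 0, 3], ![3, 0, 1, 2], ![1, 2, 3, 0], ![0, 3, 2, 1]]

/-- The `e`-transformation on pairs (`N = 2`):
`e_l (a₀, a₁) = (l * a₀, (l * a₀) * a₁)`. -/
def ePair (l : Fin 4) (p : Fin 4 × Fin 4) : Fin 4 × Fin 4 :=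
  (qmul l p.1, qmul (qmul l p.1) p.2)

/-- `F (a₀, a₁)` applies the eight successive `e`-transformations with
leaders `3, 3, a₁, a₀, a₁, a₀, a₁, a₀` (in this order). -/
def F (p : Fin 4 × Fin 4) : Fin 4 × Fin 4 :=
  ePair p.1 (ePair p.2 (ePair p.1 (ePair p.2 (ePair p.1 (ePair p.2
    (ePair 3 (ePair 3 p)))))))

/-- `F` is a bijection of `Q²` (a permutation of the 16 pairs). -/
theorem F_bijective : Function.Bijective F := by
  decide
end

section
/- Let (Q,*) be the quasigroup on Q = {0,1,2,3} with multiplication table rows (indexed by the left argument) 0*(0,1,2,3) = (2,1,0,3), 1*(0,1,2,3) = (3,0,1,2), 2*(0,1,2,3) = (1,2,3,0), 3*(0,1,2,3) = (0,3,2,1). Define G : Q^2 → Q^2 by applying to the pair (a_0, a_1) the eight successive e-transformations with leaders 3, 3, a_0, a_1, a_1, a_0, a_1, a_0 (in this order), i.e., G(a_0, a_1) = (e_{a_0} ∘ e_{a_1} ∘ e_{a_0} ∘ e_{a_1} ∘ e_{a_1} ∘ e_{a_0} ∘ e_3 ∘ e_3)(a_0, a_1). Then G is a regular function with multiplicity two: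 its image has exactly 8 elements, and every element of the image has exactly two preimages under G. -/
/-- `G (a₀, a₁)` applies the eight successive `e`-transformations with
leaders `3, 3, a₀, a₁, a₁, a₀, a₁, a₀` (in this order). -/
def G (p : Fin 4 × Fin 4) : Fin 4 × Fin 4 :=
  ePair p.1 (ePair p.2 (ePair p.1 (ePair p.2 (ePair p.2 (ePair p.1
    (ePair 3 (ePair 3 p)))))))

lemma range_eq : Set.range G = ↑(Finset.univ.image G) := by
  simp

lemma preim_eq (b : Fin 4 × Fin 4) :
    G ⁻¹' {b} = ↑(Finset.univ.filter (fun p => G p = b)) := by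
  ext p; simp

/-- `G` is a regular function with multiplicity two: its image
has exactly 8 elements, and every element of the image has exactly two
preimages under `G`. -/
theorem G_regular_two :
    (Set.range G).ncard = 8 ∧ ∀ b ∈ Set.range G, (G ⁻¹' {b}).ncard = 2 := by
  constructor
  · rw [range_eq, Set.ncard_coe_finset]
    decide
  · intro b hb
    rw [preim_eq, Set.ncard_coe_finset]
    rw [range_eq] at hb
    revert hb
    simp only [Finset.coe_image, Set.mem_image, Finset.mem_coe]
    revert b
    decide
end
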